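/- Let R be a commutative Noetherian ring, and let M and N be finitely generated R-modules satisfying Serre's conditions S_2 and S_1 respectively. If φ: M → N is an R-module homomorphism such that the localization φ_p is an isomorphism for every prime ideal p of R with height p ≤ 1, then φ is an isomorphism. -/

import Mathlib

/-!  Common definitions: Koszul homology, grade, depth, Cohen-Macaulay,
Gorenstein, Serre conditions, Ext modules. -/

open CategoryTheory

universe u v

noncomputable section

namespace Paper

/-- Degree-`j` part of the Koszul complex on `ℓ` elements, with coefficients in `M`,
modeled as functions on the set of subsets of `Fin ℓ` of cardinality `j` (`j : ℤ`). -/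
abbrev KoszulChains (ℓ : ℕ) (M : Type v) (j : ℤ) : Type v :=
  {s : Finset (Fin ℓ) // (s.card : ℤ) = j} → M

/-- The Koszul differential `K_{j+1}(y; M) → K_j(y; M)`:
`(d f)(S) = ∑_{t ∉ S} (-1)^{#{k ∈ S | k < t}} y_t • f (S ∪ {t})`. -/
def koszulD {R : Type u} [CommRing R] {ℓ : ℕ} (y : Fin ℓ → R)
    (M : Type v) [AddCommGroup M] [Module R M] (j : ℤ) :
    KoszulChains ℓ M (j + 1) →ₗ[R] KoszulChains ℓ M j where
  toFun f S := ∑ t ∈ S.1ᶜ.attach,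
    ((-1 : R) ^ ((S.1.filter (fun k => k < t.1)).card) * y t.1) •
      f ⟨insert t.1 S.1, by
        have ht : (t : Fin ℓ) ∉ S.1 := Finset.mem_compl.mp t.2
        rw [Finset.card_insert_of_notMem ht]
        push_cast
        rw [S.2]⟩
  map_add' f g := by
    funext S
    simp only [Pi.add_apply]
    rw [← Finset.sum_add_distrib]
    exact Finset.sum_congr rfl fun t _ => by rw [smul_add]
  map_smul' r f := by
    funext S
    simp only [Pi.smul_apply, RingHom.id_apply]
    rw [Finset.smul_sum]
    exact Finset.sum_congr rfl fun t _ => by rw [smul_comm]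

/-- The `j`-th Koszul homology of the sequence `y` with coefficients in `M`
(`H_j = 0` for `j < 0` or `j > ℓ` automatically). -/
abbrev koszulHomology {R : Type u} [CommRing R] {ℓ : ℕ} (y : Fin ℓ → R)
    (M : Type v) [AddCommGroup M] [Module R M] (j : ℤ) : Type v :=
  ↥(LinearMap.ker (koszulD y M (j - 1))) ⧸
    (Submodule.comap (LinearMap.ker (koszulD y M (j - 1))).subtype
      (LinearMap.range (koszulD y M (j - 1 + 1))))

/-- `Ext^n_R(A, B)` as an `R`-module (via the derived functor `Ext` of Mathlib). -/
abbrev ExtRMod (R : Type u) [CommRing R] (n : ℕ) (A B : Type u)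
    [AddCommGroup A] [Module R A] [AddCommGroup B] [Module R B] : Type u :=
  ((Ext R (ModuleCat.{u} R) n).obj (Opposite.op (ModuleCat.of R A))).obj (ModuleCat.of R B)

/-- The grade of an ideal: the supremum of the lengths of `R`-regular sequences
contained in it. -/
def idealGrade {R : Type u} [CommRing R] (I : Ideal R) : ℕ∞ :=
  ⨆ (rs : List R) (_ : ∀ r ∈ rs, r ∈ I) (_ : RingTheory.Sequence.IsRegular R rs),
    (rs.length : ℕ∞)

/-- The minimal number of generators of an ideal. -/
def minGens {R : Type u} [CommRing R] (I : Ideal R) : ℕ :=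
  sInf {n : ℕ | ∃ f : Fin n → R, Ideal.span (Set.range f) = I}

/-- The depth of a module over a local ring: the supremum of the lengths of
(weakly) regular sequences on `M` contained in the maximal ideal.  (For finitely
generated modules over a Noetherian local ring this is the usual depth, and the
zero module has depth `⊤`.) -/
def moduleDepth (R : Type u) [CommRing R] [IsLocalRing R]
    (M : Type v) [AddCommGroup M] [Module R M] : ℕ∞ :=
  ⨆ (rs : List R) (_ : ∀ r ∈ rs, r ∈ IsLocalRing.maximalIdeal R)
    (_ : RingTheory.Sequence.IsWeaklyRegular M rs), (rs.length : ℕ∞)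

/-- Depth, viewed in `WithTop ℤ` (to allow comparison with possibly negative
integer bounds). -/
def depthZ (R : Type u) [CommRing R] [IsLocalRing R]
    (M : Type v) [AddCommGroup M] [Module R M] : WithTop ℤ :=
  (moduleDepth R M).map (fun n : ℕ => (n : ℤ))

/-- The (Krull) dimension of a module: the Krull dimension of `R / ann M`. -/
def moduleDim (R : Type u) [CommRing R] (M : Type v) [AddCommGroup M] [Module R M] :
    WithBot ℕ∞ :=
  ringKrullDim (R ⧸ Module.annihilator R M)

/-- A module over a (Noetherian) local ring is Cohen-Macaulay if it is zero or its
depth equals its dimension. -/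
def IsCMModule (R : Type u) [CommRing R] [IsLocalRing R]
    (M : Type v) [AddCommGroup M] [Module R M] : Prop :=
  Subsingleton M ∨ (moduleDepth R M : WithBot ℕ∞) = moduleDim R M

/-- A module over a commutative ring is Cohen-Macaulay if all its localizations at
primes are Cohen-Macaulay. -/
def IsCMModuleGlobal (R : Type u) [CommRing R]
    (M : Type v) [AddCommGroup M] [Module R M] : Prop :=
  ∀ (p : Ideal R) [p.IsPrime],
    IsCMModule (Localization.AtPrime p) (LocalizedModule p.primeCompl M)

/-- A Cohen-Macaulay ring: a Noetherian commutative ring all of whose localizations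
at primes have depth equal to their Krull dimension. -/
def IsCMRing (R : Type u) [CommRing R] : Prop :=
  IsNoetherianRing R ∧ ∀ (p : Ideal R) [p.IsPrime],
    (moduleDepth (Localization.AtPrime p) (Localization.AtPrime p) : WithBot ℕ∞) =
      ringKrullDim (Localization.AtPrime p)

/-- `B` has finite injective dimension as an `R`-module: all sufficiently high
`Ext`s into `B` vanish. -/
def HasFiniteInjDim (R : Type u) [CommRing R] (B : Type u) [AddCommGroup B] [Module R B] :
    Prop :=
  ∃ n : ℕ, ∀ (M : Type u) [AddCommGroup M] [Module R M], ∀ k : ℕ, n < k →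
    Subsingleton (ExtRMod R k M B)

/-- A Gorenstein ring: a Noetherian commutative ring which, locally at every prime,
has finite injective dimension over itself. -/
def IsGorensteinRing (R : Type u) [CommRing R] : Prop :=
  IsNoetherianRing R ∧ ∀ (p : Ideal R) [p.IsPrime],
    HasFiniteInjDim (Localization.AtPrime p) (Localization.AtPrime p)

/-- A maximal Cohen-Macaulay module: finitely generated, with
`depth M_p = dim R_p` at every prime `p`. -/
def IsMCM (R : Type u) [CommRing R] (M : Type u) [AddCommGroup M] [Module R M] : Prop :=
  Module.Finite R M ∧ ∀ (p : Ideal R) [p.IsPrime],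
    (moduleDepth (Localization.AtPrime p) (LocalizedModule p.primeCompl M) : WithBot ℕ∞) =
      ringKrullDim (Localization.AtPrime p)

/-- Serre's condition `S_n` for an `R`-module `M`:
`depth M_p ≥ min(n, dim R_p)` for every prime `p`. -/
def SerreSn (R : Type u) [CommRing R] (M : Type v) [AddCommGroup M] [Module R M]
    (n : ℕ) : Prop :=
  ∀ (p : Ideal R) [p.IsPrime],
    min (n : WithBot ℕ∞) (ringKrullDim (Localization.AtPrime p)) ≤
      (moduleDepth (Localization.AtPrime p) (LocalizedModule p.primeCompl M) : WithBot ℕ∞)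

/-- Serre's condition `S_n` for an `R`-module `M` regarded as a module over `R/I`
(for `M` annihilated by `I`): expressed via the primes `p ⊇ I` of `R`, using that
`(R/I)_p = R_p/I R_p` and that depth over `(R/I)_p` agrees with depth over `R_p`. -/
def SerreSnQuot {R : Type u} [CommRing R] (I : Ideal R)
    (M : Type v) [AddCommGroup M] [Module R M] (n : ℕ) : Prop :=
  ∀ (p : Ideal R) [p.IsPrime], I ≤ p →
    min (n : WithBot ℕ∞)
        (ringKrullDim ((Localization.AtPrime p) ⧸
          (I.map (algebraMap R (Localization.AtPrime p))))) ≤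
      (moduleDepth (Localization.AtPrime p) (LocalizedModule p.primeCompl M) : WithBot ℕ∞)


/-- The `h`-sliding depth condition `SD_h` for the Koszul homology of the sequence `y`
(where `d = dim R`, `g = grade` of the ideal generated by `y`, and `ℓ` is the length
of `y`): `depth H_i ≥ min(d - g, d - ℓ + i + h)` for all `i`. -/
def SDCond {R : Type u} [CommRing R] [IsLocalRing R] {ℓ : ℕ} (y : Fin ℓ → R)
    (d g h : ℕ) : Prop :=
  ∀ i : ℕ, ((min ((d : ℤ) - g) ((d : ℤ) - ℓ + i + h) : ℤ) : WithTop ℤ) ≤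
    depthZ R (koszulHomology y R (i : ℤ))

end Paper

end

/-!
If `p` is an associated prime of `K`, the maximal ideal of `R_p` is an associated prime of `K_p`,
so `K_p ≠ 0` and `depth K_p = 0`.

An associated prime `p` of `ker φ` is associated to `M`, so `S_1` for `M` forces `dim R_p = 0`;
there `φ_p` is injective, hence `(ker φ)_p = 0`, which is absurd. An associated prime `p` of
`coker φ` can neither have `dim R_p ≤ 1`, where `φ_p` is onto, nor `dim R_p ≥ 2`, where
`depth M_p ≥ 2` and `depth N_p ≥ 1` give `depth (coker φ)_p ≥ 1` by the depth lemma for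
`0 → M_p → N_p → (coker φ)_p → 0`.
-/

open Paper RingTheory.Sequence IsLocalRing Module.associatedPrimes

section Regular

variable {R M N : Type*} [CommRing R] [AddCommGroup M] [Module R M] [AddCommGroup N] [Module R N]

theorem IsAssociatedPrime.exists_ne_zero_smul_eq_zero [IsNoetherianRing R] {I : Ideal R}
    (h : IsAssociatedPrime I M) : ∃ x : M, x ≠ 0 ∧ ∀ r ∈ I, r • x = 0 := by
  obtain ⟨hI, x, rfl⟩ := isAssociatedPrime_iff.mp h
  refine ⟨x, fun hx => hI.ne_top ?_, fun r hr => ?_⟩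
  · rw [Ideal.eq_top_iff_one, Submodule.mem_colon_singleton, hx, smul_zero]
    exact Submodule.zero_mem _
  · simpa [Submodule.mem_colon_singleton] using hr

open Pointwise in
theorem mem_range_of_smul_mem_range {f : M →ₗ[R] N} (hf : Function.Injective f)
    {a b r : R} (ha : IsSMulRegular M a) (hb : IsSMulRegular (QuotSMulTop a M) b)
    (hr : IsSMulRegular N r) {ν : N} (haν : a • ν ∈ Set.range f) (hbν : b • ν ∈ Set.range f)
    (hrν : r • ν ∈ Set.range f) : ν ∈ Set.range f := by
  obtain ⟨α, hα⟩ := haν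
  obtain ⟨β, hβ⟩ := hbν
  obtain ⟨ρ, hρ⟩ := hrν
  have hba : b • α = a • β := hf (by rw [map_smul, map_smul, hα, hβ, smul_comm])
  obtain ⟨γ, -, hγ⟩ : α ∈ (a • ⊤ : Submodule R M) := by
    rw [← Submodule.Quotient.mk_eq_zero]
    refine hb.right_eq_zero_of_smul ?_
    rw [← Submodule.Quotient.mk_smul, hba, Submodule.Quotient.mk_eq_zero]
    exact Submodule.smul_mem_pointwise_smul β a ⊤ trivial
  replace hγ : a • γ = α := hγ
  have hργ : ρ = r • γ := by
    refine ha (hf ?_)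
    rw [map_smul, hρ, smul_comm, ← hα, ← hγ, ← map_smul, smul_comm]
  exact ⟨γ, hr (show r • f γ = r • ν by rw [← map_smul, ← hργ, hρ])⟩

end Regular

section Depth

variable {R M N C : Type*} [CommRing R] [IsLocalRing R]
  [AddCommGroup M] [Module R M] [AddCommGroup N] [Module R N] [AddCommGroup C] [Module R C]

theorem moduleDepth_eq_zero_of_isAssociatedPrime [IsNoetherianRing R]
    (h : IsAssociatedPrime (maximalIdeal R) M) : moduleDepth R M = 0 := by
  obtain ⟨x, hx, hann⟩ := h.exists_ne_zero_smul_eq_zero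
  refine nonpos_iff_eq_zero.mp (iSup₂_le fun rs hrs => iSup_le fun hreg => ?_)
  cases rs with
  | nil => simp
  | cons r rs =>
    have hr := ((isWeaklyRegular_cons_iff M r rs).mp hreg).1
    exact absurd (hr.right_eq_zero_of_smul (hann r (hrs r List.mem_cons_self))) hx

theorem exists_isWeaklyRegular_of_lt_moduleDepth {k : ℕ} (hk : (k : ℕ∞) < moduleDepth R M) :
    ∃ rs : List R, (∀ r ∈ rs, r ∈ maximalIdeal R) ∧ IsWeaklyRegular M rs ∧ k < rs.length := by
  simp only [moduleDepth, lt_iSup_iff] at hk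
  obtain ⟨rs, hrs, hreg, hlt⟩ := hk
  exact ⟨rs, hrs, hreg, by exact_mod_cast hlt⟩

theorem not_isAssociatedPrime_maximalIdeal_of_exact [IsNoetherianRing R]
    {f : M →ₗ[R] N} {g : N →ₗ[R] C}
    (hf : Function.Injective f) (hg : Function.Surjective g) (hfg : Function.Exact f g)
    (hM : 2 ≤ moduleDepth R M) (hN : 1 ≤ moduleDepth R N) :
    ¬ IsAssociatedPrime (maximalIdeal R) C := by
  intro hC
  obtain ⟨c, hc, hann⟩ := hC.exists_ne_zero_smul_eq_zero
  obtain ⟨ν, rfl⟩ := hg c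
  have hν : ∀ s ∈ maximalIdeal R, s • ν ∈ Set.range f := fun s hs =>
    (hfg _).mp (by rw [map_smul]; exact hann s hs)
  obtain ⟨_ | ⟨a, _ | ⟨b, rs⟩⟩, hab, hregM, hlen⟩ := exists_isWeaklyRegular_of_lt_moduleDepth
    (k := 1) ((ENat.add_one_le_iff (ENat.natCast_ne_top 1)).mp hM)
  · simp at hlen
  · simp at hlen
  obtain ⟨_ | ⟨r, rs'⟩, hr, hregN, hlen'⟩ := exists_isWeaklyRegular_of_lt_moduleDepth
    (k := 0) (Order.one_le_iff_pos.mp hN)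
  · simp at hlen'
  rw [isWeaklyRegular_cons_iff, isWeaklyRegular_cons_iff] at hregM
  rw [isWeaklyRegular_cons_iff] at hregN
  refine hc ((hfg ν).mpr (mem_range_of_smul_mem_range hf hregM.1 hregM.2.1 hregN.1 ?_ ?_ ?_))
  · exact hν a (hab a (by simp))
  · exact hν b (hab b (by simp))
  · exact hν r (hr r (by simp))

end Depth

section Serre

variable {R M : Type*} [CommRing R] [AddCommGroup M] [Module R M]

theorem Paper.SerreSn.mono {m n : ℕ} (h : SerreSn R M n) (hmn : m ≤ n) : SerreSn R M m :=
  fun p _ => (min_le_min_right _ (by exact_mod_cast hmn)).trans (h p)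

theorem Paper.SerreSn.le_moduleDepth {n : ℕ} (h : SerreSn R M n) (p : Ideal R) [p.IsPrime]
    (hp : (n : WithBot ℕ∞) ≤ ringKrullDim (Localization.AtPrime p)) :
    (n : ℕ∞) ≤ moduleDepth (Localization.AtPrime p) (LocalizedModule p.primeCompl M) := by
  have := h p
  rw [min_eq_left hp] at this
  exact_mod_cast this

end Serre
section Localization

variable {R M N : Type*} [CommRing R] [IsNoetherianRing R]
  [AddCommGroup M] [Module R M] [AddCommGroup N] [Module R N]

theorem injective_of_serreSn_one (φ : M →ₗ[R] N) (hM : SerreSn R M 1)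
    (hloc : ∀ (p : Ideal R) [p.IsPrime], ringKrullDim (Localization.AtPrime p) ≤ 0 →
      Function.Injective (LocalizedModule.map p.primeCompl φ)) :
    Function.Injective φ := by
  by_contra hφ
  have : Nontrivial (LinearMap.ker φ) :=
    Submodule.nontrivial_iff_ne_bot.mpr (mt LinearMap.ker_eq_bot.mp hφ)
  obtain ⟨p, hp⟩ := associatedPrimes.nonempty R (LinearMap.ker φ)
  have := hp.isPrime
  have hK := mem_associatedPrimes_atPrime_of_mem_associatedPrimes hp
  set ι := LocalizedModule.map p.primeCompl (LinearMap.ker φ).subtype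
  have hι : Function.Injective ι :=
    LocalizedModule.map_injective _ _ (LinearMap.ker φ).injective_subtype
  have hexact : Function.Exact ι (LocalizedModule.map p.primeCompl φ) :=
    LocalizedModule.map_exact _ _ _ (LinearMap.exact_subtype_ker_map φ)
  have hdepth := moduleDepth_eq_zero_of_isAssociatedPrime (hK.map_of_injective ι hι)
  have hdim : ringKrullDim (Localization.AtPrime p) ≤ 0 := by
    have := hM p
    rw [hdepth] at this
    rcases min_le_iff.mp this with h | h
    · exact absurd h (by norm_num)
    · exact_mod_cast h
  have hι0 : ∀ x, ι x = 0 := fun x =>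
    hloc p hdim (by rw [hexact.apply_apply_eq_zero, map_zero])
  have : Subsingleton (LocalizedModule p.primeCompl (LinearMap.ker φ)) :=
    ⟨fun x y => hι (by rw [hι0, hι0])⟩
  exact not_isAssociatedPrime_of_subsingleton hK

theorem surjective_of_serreSn_two_of_serreSn_one (φ : M →ₗ[R] N) (hM : SerreSn R M 2)
    (hN : SerreSn R N 1) (hφ : Function.Injective φ)
    (hloc : ∀ (p : Ideal R) [p.IsPrime], ringKrullDim (Localization.AtPrime p) ≤ 1 →
      Function.Surjective (LocalizedModule.map p.primeCompl φ)) :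
    Function.Surjective φ := by
  by_contra hφ'
  have : Nontrivial (N ⧸ LinearMap.range φ) :=
    Submodule.Quotient.nontrivial_iff.mpr (mt LinearMap.range_eq_top.mp hφ')
  obtain ⟨p, hp⟩ := associatedPrimes.nonempty R (N ⧸ LinearMap.range φ)
  have := hp.isPrime
  have hC := mem_associatedPrimes_atPrime_of_mem_associatedPrimes hp
  set ψ := LocalizedModule.map p.primeCompl φ
  set π := LocalizedModule.map p.primeCompl (LinearMap.range φ).mkQ
  have hπ : Function.Surjective π :=
    LocalizedModule.map_surjective _ _ (Submodule.mkQ_surjective _)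
  have hexact : Function.Exact ψ π :=
    LocalizedModule.map_exact _ _ _ (LinearMap.exact_map_mkQ_range φ)
  by_cases hdim : ringKrullDim (Localization.AtPrime p) ≤ 1
  · have hπ0 : ∀ y, π y = 0 := fun y => by
      obtain ⟨x, rfl⟩ := hloc p hdim y
      exact hexact.apply_apply_eq_zero x
    have : Subsingleton (LocalizedModule p.primeCompl (N ⧸ LinearMap.range φ)) :=
      ⟨fun x y => by
        obtain ⟨x, rfl⟩ := hπ x
        obtain ⟨y, rfl⟩ := hπ y
        rw [hπ0, hπ0]⟩
    exact not_isAssociatedPrime_of_subsingleton hC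
  · have h2 : (2 : WithBot ℕ∞) ≤ ringKrullDim (Localization.AtPrime p) := by
      revert hdim
      induction ringKrullDim (Localization.AtPrime p) with
      | bot => simp
      | coe d =>
        intro hdim
        have hd : (1 : ℕ∞) < d := by exact_mod_cast not_le.mp hdim
        exact WithBot.coe_le_coe.mpr ((ENat.add_one_le_iff ENat.one_ne_top).mpr hd)
    exact not_isAssociatedPrime_maximalIdeal_of_exact (LocalizedModule.map_injective _ _ hφ) hπ
      hexact (hM.le_moduleDepth p h2) (hN.le_moduleDepth p (one_le_two.trans h2)) hC

end Localization

open Paper in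
theorem stmt4_general {R : Type u} [CommRing R] [IsNoetherianRing R]
    {M N : Type u} [AddCommGroup M] [Module R M] [AddCommGroup N] [Module R N]
    (hM : SerreSn R M 2) (hN : SerreSn R N 1) (φ : M →ₗ[R] N)
    (hloc : ∀ (p : Ideal R) [p.IsPrime],
      ringKrullDim (Localization.AtPrime p) ≤ (1 : WithBot ℕ∞) →
        Function.Bijective ⇑(LocalizedModule.map p.primeCompl φ)) :
    Function.Bijective ⇑φ := by
  have hinj : Function.Injective φ :=
    injective_of_serreSn_one φ (hM.mono one_le_two) fun p _ hp =>
      (hloc p (hp.trans zero_le_one)).injective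
  exact ⟨hinj, surjective_of_serreSn_two_of_serreSn_one φ hM hN hinj fun p _ hp =>
    (hloc p hp).surjective⟩

open Paper in
/-- A map between an `S_2` module and an `S_1` module which is an isomorphism in
codimension at most one is an isomorphism. -/
theorem stmt4 {R : Type u} [CommRing R] [IsNoetherianRing R]
    {M N : Type u} [AddCommGroup M] [Module R M] [AddCommGroup N] [Module R N]
    [Module.Finite R M] [Module.Finite R N]
    (hM : SerreSn R M 2) (hN : SerreSn R N 1) (φ : M →ₗ[R] N)
    (hloc : ∀ (p : Ideal R) [p.IsPrime],
      ringKrullDim (Localization.AtPrime p) ≤ (1 : WithBot ℕ∞) →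
        Function.Bijective ⇑(LocalizedModule.map p.primeCompl φ)) :
    Function.Bijective ⇑φ :=
  stmt4_general hM hN φ hloc
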